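/- arXiv:2408.02435 — 4 statements merged into one kernel-verified Lean document; each statement's English description precedes it below -/
import Mathlib

section
/- Let C = (G, M, I) be a formal context with intent set INT and extent set EXT. Let C* = (G, M \ {m}, I*) be the context obtained by deleting the column of attribute m ∈ M, with intent set INT* and extent set EXT*. Then INT* = {B \ {m} : B ∈ INT} and EXT* ⊆ EXT. -/
variable {G M : Type*}

/-- Attribute derivation of a set of objects, relative to attribute carrier `atts`. -/
def attUp (atts : Set M) (I : Set (G × M)) (A : Set G) : Set M :=
  {m ∈ atts | ∀ g ∈ A, (g, m) ∈ I}

/-- Object derivation of a set of attributes. -/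
def objDown (I : Set (G × M)) (Bs : Set M) : Set G :=
  {g | ∀ m ∈ Bs, (g, m) ∈ I}

/-- `(A, Bs)` is a formal concept of the context with attribute set `atts` and incidence `I`. -/
def IsConcept (atts : Set M) (I : Set (G × M)) (A : Set G) (Bs : Set M) : Prop :=
  attUp atts I A = Bs ∧ objDown I Bs = A

/-- The set of intents. -/
def intents (atts : Set M) (I : Set (G × M)) : Set (Set M) :=
  {Bs | ∃ A, IsConcept atts I A Bs}

/-- The set of extents. -/
def extents (atts : Set M) (I : Set (G × M)) : Set (Set G) :=
  {A | ∃ Bs, IsConcept atts I A Bs}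

lemma attUp_star (Ms : Set M) (I : Set (G × M)) (m : M) (A : Set G) :
    attUp (Ms \ {m}) {p ∈ I | p.2 ≠ m} A = attUp Ms I A \ {m} := by
  ext m'
  simp only [attUp, Set.mem_setOf_eq, Set.mem_diff, Set.mem_singleton_iff]
  constructor
  · rintro ⟨⟨h1, h2⟩, h3⟩
    exact ⟨⟨h1, fun g hg => (h3 g hg).1⟩, h2⟩
  · rintro ⟨⟨h1, h3⟩, h2⟩
    exact ⟨⟨h1, h2⟩, fun g hg => ⟨h3 g hg, h2⟩⟩

lemma objDown_star (I : Set (G × M)) (m : M) (Bs : Set M) (h : m ∉ Bs) :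
    objDown {p ∈ I | p.2 ≠ m} Bs = objDown I Bs := by
  ext g
  simp only [objDown, Set.mem_setOf_eq]
  constructor
  · intro h' m' hm'
    exact (h' m' hm').1
  · intro h' m' hm'
    exact ⟨h' m' hm', fun e => h (e ▸ hm')⟩

lemma subset_objDown_attUp (Ms : Set M) (I : Set (G × M)) (A : Set G) :
    A ⊆ objDown I (attUp Ms I A) := by
  intro g hg m' hm'
  exact hm'.2 g hg

lemma subset_attUp_objDown (Ms : Set M) (I : Set (G × M)) {Bs : Set M} (h : Bs ⊆ Ms) :
    Bs ⊆ attUp Ms I (objDown I Bs) := by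
  intro m' hm'
  exact ⟨h hm', fun g hg => hg m' hm'⟩

lemma attUp_anti (Ms : Set M) (I : Set (G × M)) {A₁ A₂ : Set G} (h : A₁ ⊆ A₂) :
    attUp Ms I A₂ ⊆ attUp Ms I A₁ := by
  intro m' hm'
  exact ⟨hm'.1, fun g hg => hm'.2 g (h hg)⟩

lemma objDown_anti (I : Set (G × M)) {B₁ B₂ : Set M} (h : B₁ ⊆ B₂) :
    objDown I B₂ ⊆ objDown I B₁ := by
  intro g hg m' hm'
  exact hg m' (h hm')

lemma attUp_subset (Ms : Set M) (I : Set (G × M)) (A : Set G) :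
    attUp Ms I A ⊆ Ms := fun _ h => h.1

lemma attUp_objDown_attUp (Ms : Set M) (I : Set (G × M)) (A : Set G) :
    attUp Ms I (objDown I (attUp Ms I A)) = attUp Ms I A := by
  apply Set.Subset.antisymm
  · exact attUp_anti Ms I (subset_objDown_attUp Ms I A)
  · exact subset_attUp_objDown Ms I (attUp_subset Ms I A)

lemma attUp_mem_intents (Ms : Set M) (I : Set (G × M)) (A : Set G) :
    attUp Ms I A ∈ intents Ms I :=
  ⟨objDown I (attUp Ms I A), attUp_objDown_attUp Ms I A, rfl⟩

theorem stmt1 (Ms : Set M) (I : Set (G × M)) (m : M) (hm : m ∈ Ms)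
    (hI : ∀ p ∈ I, p.2 ∈ Ms) :
    intents (Ms \ {m}) {p ∈ I | p.2 ≠ m} = (fun Bs => Bs \ {m}) '' intents Ms I ∧
    extents (Ms \ {m}) {p ∈ I | p.2 ≠ m} ⊆ extents Ms I := by
  constructor
  · apply Set.Subset.antisymm
    · rintro Bs ⟨A, hc, -⟩
      exact ⟨attUp Ms I A, attUp_mem_intents Ms I A, by rw [← hc, attUp_star]⟩
    · rintro _ ⟨B, ⟨A, hc1, hc2⟩, rfl⟩
      -- show B \ {m} is an intent of the starred context
      have hBMs : B ⊆ Ms := hc1 ▸ attUp_subset Ms I A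
      have hmB : m ∉ B \ {m} := fun h => h.2 rfl
      refine ⟨objDown I (B \ {m}), ?_, ?_⟩
      · rw [attUp_star]
        apply Set.Subset.antisymm
        · rintro m' ⟨hm1, hm2⟩
          refine ⟨?_, hm2⟩
          -- A ⊆ objDown I (B \ {m})
          have hA : A ⊆ objDown I (B \ {m}) := by
            rw [← hc2]
            exact objDown_anti I Set.diff_subset
          have : m' ∈ attUp Ms I A := attUp_anti Ms I hA hm1
          rw [hc1] at this
          exact this
        · intro m' hm'
          refine ⟨⟨hBMs hm'.1, fun g hg => hg m' hm'⟩, hm'.2⟩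
      · rw [objDown_star I m _ hmB]
  · rintro A ⟨Bs, hc1, hc2⟩
    have hmBs : m ∉ Bs := by
      rw [← hc1]
      exact fun h => h.1.2 rfl
    rw [objDown_star I m _ hmBs] at hc2
    refine ⟨attUp Ms I A, rfl, ?_⟩
    -- objDown I (attUp Ms I A) = A
    apply Set.Subset.antisymm
    · have hBs : Bs ⊆ attUp Ms I A := by
        rw [← hc1]
        rintro m' ⟨⟨h1, -⟩, h2⟩
        exact ⟨h1, fun g hg => (h2 g hg).1⟩
      calc objDown I (attUp Ms I A) ⊆ objDown I Bs := objDown_anti I hBs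
        _ = A := hc2
    · exact subset_objDown_attUp Ms I A
end

section
/- Let C = (G, M, I) be a formal context with stem base L (the set of implications P → P'' for P a pseudo-intent), and let C* = (G, M \ {m}, I*) be obtained by deleting the column of attribute m, with stem base L*. If A → B is in L and m ∉ B, then A → B is in L*. -/
variable {G M : Type*} [Fintype G] [DecidableEq G] [Fintype M] [DecidableEq M]

/-- Attribute derivation, relative to attribute carrier `atts`. -/
def fUp (atts : Finset M) (I : Finset (G × M)) (A : Finset G) : Finset M :=
  atts.filter fun m => ∀ g ∈ A, (g, m) ∈ I

/-- Object derivation. -/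
def fDown (I : Finset (G × M)) (Bs : Finset M) : Finset G :=
  Finset.univ.filter fun g => ∀ m ∈ Bs, (g, m) ∈ I

/-- The closure `X ↦ X''` on attribute sets. -/
def fCl (atts : Finset M) (I : Finset (G × M)) (X : Finset M) : Finset M :=
  fUp atts I (fDown I X)

/-- `P` is a pseudo-intent of the context with attribute set `atts` and incidence `I`. -/
def Pseudo (atts : Finset M) (I : Finset (G × M)) (P : Finset M) : Prop :=
  P ⊆ atts ∧ P ≠ fCl atts I P ∧ ∀ Q, Q ⊂ P → Pseudo atts I Q → fCl atts I Q ⊆ P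
termination_by P.card
decreasing_by exact Finset.card_lt_card ‹_›

/-- The intents of the context. -/
def fIntents (atts : Finset M) (I : Finset (G × M)) : Set (Finset M) :=
  {Bs | ∃ A, fUp atts I A = Bs ∧ fDown I Bs = A}

lemma pseudo_iff (atts : Finset M) (I : Finset (G × M)) (P : Finset M) :
    Pseudo atts I P ↔
      P ⊆ atts ∧ P ≠ fCl atts I P ∧ ∀ Q, Q ⊂ P → Pseudo atts I Q → fCl atts I Q ⊆ P := by
  rw [Pseudo]

lemma fDown_filter (I : Finset (G × M)) (m : M) (X : Finset M) (hmX : m ∉ X) :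
    fDown (I.filter fun p => p.2 ≠ m) X = fDown I X := by
  unfold fDown
  apply Finset.filter_congr
  intro g _
  constructor
  · intro h m' hm'
    exact (Finset.mem_filter.mp (h m' hm')).1
  · intro h m' hm'
    exact Finset.mem_filter.mpr ⟨h m' hm', fun e => hmX (e ▸ hm')⟩

lemma fUp_erase (Ms : Finset M) (I : Finset (G × M)) (m : M) (A : Finset G) :
    fUp (Ms.erase m) (I.filter fun p => p.2 ≠ m) A = (fUp Ms I A).erase m := by
  ext x
  simp only [fUp, Finset.mem_filter, Finset.mem_erase]
  constructor
  · rintro ⟨⟨hne, hMs⟩, h⟩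
    exact ⟨hne, hMs, fun g hg => (h g hg).1⟩
  · rintro ⟨hne, hMs, h⟩
    exact ⟨⟨hne, hMs⟩, fun g hg => ⟨h g hg, hne⟩⟩

lemma fCl_erase (Ms : Finset M) (I : Finset (G × M)) (m : M) (X : Finset M) (hmX : m ∉ X) :
    fCl (Ms.erase m) (I.filter fun p => p.2 ≠ m) X = (fCl Ms I X).erase m := by
  unfold fCl
  rw [fDown_filter I m X hmX, fUp_erase]

lemma subset_fCl (Ms : Finset M) (I : Finset (G × M)) (X : Finset M) (h : X ⊆ Ms) :
    X ⊆ fCl Ms I X := by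
  intro x hx
  refine Finset.mem_filter.mpr ⟨h hx, fun g hg => ?_⟩
  exact (Finset.mem_filter.mp hg).2 x hx

lemma key (Ms : Finset M) (I : Finset (G × M)) (m : M)
    (P : Finset M) (hP : Pseudo Ms I P) (hmP : m ∉ fCl Ms I P) :
    ∀ S, S ⊂ P → (Pseudo Ms I S ↔ Pseudo (Ms.erase m) (I.filter fun p => p.2 ≠ m) S) := by
  obtain ⟨hPM, -, hPmin⟩ := (pseudo_iff Ms I P).mp hP
  have hmP' : m ∉ P := fun h => hmP (subset_fCl Ms I P hPM h)
  have hmFcl : ∀ R, R ⊂ P → Pseudo Ms I R → m ∉ fCl Ms I R := fun R hRP hR hmem =>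
    hmP (subset_fCl Ms I P hPM (hPmin R hRP hR hmem))
  intro S
  induction S using Finset.strongInduction with
  | _ S ih =>
  intro hSP
  have hmS : m ∉ S := fun h => hmP' (hSP.subset h)
  constructor
  · intro hS
    obtain ⟨hSM, hSne, hSmin⟩ := (pseudo_iff Ms I S).mp hS
    have hClS : fCl (Ms.erase m) (I.filter fun p => p.2 ≠ m) S = fCl Ms I S := by
      rw [fCl_erase Ms I m S hmS, Finset.erase_eq_of_notMem (hmFcl S hSP hS)]
    refine (pseudo_iff _ _ S).mpr ⟨?_, ?_, ?_⟩
    · exact fun x hx => Finset.mem_erase.mpr ⟨fun e => hmS (e ▸ hx), hSM hx⟩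
    · rw [hClS]; exact hSne
    · intro R hRS hR
      have hRP : R ⊂ P := hRS.trans hSP
      have hRC : Pseudo Ms I R := (ih R hRS hRP).mpr hR
      have : fCl Ms I R ⊆ S := hSmin R hRS hRC
      rw [fCl_erase Ms I m R (fun h => hmP' (hRP.subset h)),
        Finset.erase_eq_of_notMem (hmFcl R hRP hRC)]
      exact this
  · intro hS
    obtain ⟨hSM, hSne, hSmin⟩ := (pseudo_iff _ _ S).mp hS
    refine (pseudo_iff Ms I S).mpr ⟨fun x hx => Finset.mem_of_mem_erase (hSM hx), ?_, ?_⟩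
    · intro heq
      apply hSne
      rw [fCl_erase Ms I m S hmS, ← heq, Finset.erase_eq_of_notMem hmS]
    · intro R hRS hR
      have hRP : R ⊂ P := hRS.trans hSP
      have hR' := (ih R hRS hRP).mp hR
      have := hSmin R hRS hR'
      rwa [fCl_erase Ms I m R (fun h => hmP' (hRP.subset h)),
        Finset.erase_eq_of_notMem (hmFcl R hRP hR)] at this

theorem stmt11 (Ms : Finset M) (I : Finset (G × M)) (m : M) (hm : m ∈ Ms)
    (hI : ∀ p ∈ I, p.2 ∈ Ms)
    (A B : Finset M) (hA : Pseudo Ms I A) (hB : B = fCl Ms I A) (hmB : m ∉ B) :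
    Pseudo (Ms.erase m) (I.filter fun p => p.2 ≠ m) A ∧
    fCl (Ms.erase m) (I.filter fun p => p.2 ≠ m) A = B := by
  obtain ⟨hAM, hAne, hAmin⟩ := (pseudo_iff Ms I A).mp hA
  have hmFclA : m ∉ fCl Ms I A := hB ▸ hmB
  have hmA : m ∉ A := fun h => hmFclA (subset_fCl Ms I A hAM h)
  have hClA : fCl (Ms.erase m) (I.filter fun p => p.2 ≠ m) A = B := by
    rw [fCl_erase Ms I m A hmA, ← hB, Finset.erase_eq_of_notMem hmB]
  refine ⟨(pseudo_iff _ _ A).mpr ⟨?_, ?_, ?_⟩, hClA⟩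
  · exact fun x hx => Finset.mem_erase.mpr ⟨fun e => hmA (e ▸ hx), hAM hx⟩
  · rw [hClA, hB]; exact hAne
  · intro Q hQA hQ
    have hQC : Pseudo Ms I Q := (key Ms I m A hA hmFclA Q hQA).mpr hQ
    have h1 : fCl Ms I Q ⊆ A := hAmin Q hQA hQC
    rw [fCl_erase Ms I m Q (fun h => hmA (hQA.subset h))]
    exact (Finset.erase_subset m _).trans h1
end

section
/- Let C = (G, M, I) be a formal context with intent set INT and stem base L, and let C* = (G, M \ {m}, I*) be obtained by deleting the column of m, with intent set INT*. Suppose A → B ∈ L with m ∈ A, and suppose A_i → B_i ∈ L with m ∉ A_i, m ∈ B_i and B_i ⊆ B. If (A ∪ A_i) \ {m} ∉ INT*, then the implication (A ∪ A_i) \ {m} → B \ {m} holds in C*. -/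
variable {G M : Type*} [Fintype G] [DecidableEq G] [Fintype M] [DecidableEq M]

lemma fDown_fCl (Ms : Finset M) (I : Finset (G × M)) (X : Finset M) (hX : X ⊆ Ms) :
    fDown I (fCl Ms I X) = fDown I X := by
  ext g
  simp only [fDown, fCl, fUp, Finset.mem_filter, Finset.mem_univ, true_and]
  constructor
  · intro h n hn
    exact h n ⟨hX hn, fun g' hg' => hg' n hn⟩
  · intro h n hn
    exact hn.2 g h

theorem stmt13 (Ms : Finset M) (I : Finset (G × M)) (m : M) (hm : m ∈ Ms)
    (hI : ∀ p ∈ I, p.2 ∈ Ms)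
    (A B Ai Bi : Finset M)
    (hA : Pseudo Ms I A) (hB : B = fCl Ms I A) (hmA : m ∈ A)
    (hAi : Pseudo Ms I Ai) (hBi : Bi = fCl Ms I Ai)
    (hmAi : m ∉ Ai) (hmBi : m ∈ Bi) (hBiB : Bi ⊆ B)
    (hnotint : (A ∪ Ai).erase m ∉ fIntents (Ms.erase m) (I.filter fun p => p.2 ≠ m)) :
    fDown (I.filter fun p => p.2 ≠ m) ((A ∪ Ai).erase m) ⊆
      fDown (I.filter fun p => p.2 ≠ m) (B.erase m) := by
  intro g hg
  rw [Pseudo] at hA hAi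
  simp only [fDown, Finset.mem_filter, Finset.mem_univ, true_and] at hg ⊢
  -- g satisfies every attribute in (A ∪ Ai).erase m, in I
  have hg' : ∀ n ∈ (A ∪ Ai).erase m, (g, n) ∈ I := fun n hn => (hg n hn).1
  -- g ∈ fDown I Ai
  have hgAi : g ∈ fDown I Ai := by
    simp only [fDown, Finset.mem_filter, Finset.mem_univ, true_and]
    intro n hn
    exact hg' n (Finset.mem_erase.2 ⟨fun e => hmAi (e ▸ hn), Finset.mem_union_right _ hn⟩)
  have hgBi : g ∈ fDown I Bi := by
    rw [hBi, fDown_fCl Ms I Ai hAi.1]; exact hgAi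
  have hgm : (g, m) ∈ I := by
    simp only [fDown, Finset.mem_filter, Finset.mem_univ, true_and] at hgBi
    exact hgBi m hmBi
  have hgA : g ∈ fDown I A := by
    simp only [fDown, Finset.mem_filter, Finset.mem_univ, true_and]
    intro n hn
    by_cases hnm : n = m
    · exact hnm ▸ hgm
    · exact hg' n (Finset.mem_erase.2 ⟨hnm, Finset.mem_union_left _ hn⟩)
  have hgB : g ∈ fDown I B := by
    rw [hB, fDown_fCl Ms I A hA.1]; exact hgA
  simp only [fDown, Finset.mem_filter, Finset.mem_univ, true_and] at hgB
  intro n hn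
  rcases Finset.mem_erase.1 hn with ⟨hnm, hnB⟩
  exact ⟨hgB n hnB, hnm⟩
end

section
/- Let (G, M, I) be a formal context and L the set of all implications that hold in it (i.e., all pairs A → B with B ⊆ A''). Then Mod(L) = {T ⊆ M : T respects every implication in L} is exactly the set of all concept intents of (G, M, I). -/
variable {G M : Type*}

/-- Attribute derivation. -/
def up (I : Set (G × M)) (A : Set G) : Set M :=
  {m | ∀ g ∈ A, (g, m) ∈ I}

/-- Object derivation. -/
def down (I : Set (G × M)) (Bs : Set M) : Set G :=
  {g | ∀ m ∈ Bs, (g, m) ∈ I}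

lemma sub_updown (I : Set (G × M)) (T : Set M) : T ⊆ up I (down I T) :=
  fun m hm g hg => hg m hm

lemma updown_mono (I : Set (G × M)) {A T : Set M} (h : A ⊆ T) :
    up I (down I A) ⊆ up I (down I T) :=
  fun m hm g hg => hm g (fun n hn => hg n (h hn))

theorem stmt17 (I : Set (G × M)) :
    {T : Set M | ∀ A B : Set M, B ⊆ up I (down I A) → A ⊆ T → B ⊆ T} =
      {T : Set M | up I (down I T) = T} := by
  ext T
  simp only [Set.mem_setOf_eq]
  constructor
  · intro h
    exact Set.Subset.antisymm (h T (up I (down I T)) (fun x hx => hx) (fun x hx => hx))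
      (sub_updown I T)
  · intro h A B hB hA
    exact fun m hm => h ▸ (updown_mono I hA (hB hm))
end
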